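/- Let h : ℝ² → ℝ be of class C² with h(x+1, x̄+1) = h(x, x̄) and h₁₂(x, x̄) < 0 for all (x, x̄) ∈ ℝ². Let φ : ℝ → ℝ be an increasing bi-Lipschitz homeomorphism with φ(x+1) = φ(x) + 1 satisfying h₂(φ⁻¹(x), x) + h₁(x, φ(x)) = 0 for all x ∈ ℝ. Define a(x) = h₂₂(φ⁻¹(x), x) + h₁₁(x, φ(x)). Then a(x) > 0 for all x ∈ ℝ. -/

import Mathlib

/-- Partial derivative of `h` with respect to its first argument. -/
noncomputable def h1 (h : ℝ → ℝ → ℝ) (x y : ℝ) : ℝ := deriv (fun u => h u y) x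

/-- Partial derivative of `h` with respect to its second argument. -/
noncomputable def h2 (h : ℝ → ℝ → ℝ) (x y : ℝ) : ℝ := deriv (fun v => h x v) y

/-- Second partial derivative of `h` with respect to its first argument, twice. -/
noncomputable def h11 (h : ℝ → ℝ → ℝ) (x y : ℝ) : ℝ := deriv (fun u => h1 h u y) x

/-- Mixed second partial derivative of `h`. -/
noncomputable def h12 (h : ℝ → ℝ → ℝ) (x y : ℝ) : ℝ := deriv (fun v => h1 h x v) y

/-- Second partial derivative of `h` with respect to its second argument, twice. -/
noncomputable def h22 (h : ℝ → ℝ → ℝ) (x y : ℝ) : ℝ := deriv (fun v => h2 h x v) y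

/-! Fix `x` and let `F t = h₂(ψ x, t) + h₁(t, φ x)`, so that `F x = 0` by the Euler–Lagrange
equation and `F' x = a x`. Subtracting the Euler–Lagrange equation at `t > x` gives
`F t = (h₂(ψ x, t) - h₂(ψ t, t)) + (h₁(t, φ x) - h₁(t, φ t))`. By symmetry of mixed partials the
twist condition makes `h₂` decreasing in its first argument, so the first bracket is `≥ 0` since
`ψ` is increasing. On a compact rectangle `h₁₂ ≤ -m < 0`, so the second bracket is
`≥ m (φ t - φ x) ≥ (m / K) (t - x)` by the anti-Lipschitz bound. Hence the right difference
quotients of `F` at `x` stay `≥ m / K`, and so does `a x`. -/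

open Function Set Filter Topology

section Slices

variable {𝕜 E : Type*} [NontriviallyNormedField 𝕜] [NormedAddCommGroup E] [NormedSpace 𝕜 E]
  {G : 𝕜 × 𝕜 → E} {G' : 𝕜 × 𝕜 →L[𝕜] E} {x y : 𝕜}

theorem HasFDerivAt.hasDerivAt_slice_fst (hG : HasFDerivAt G G' (x, y)) :
    HasDerivAt (fun u => G (u, y)) (G' (1, 0)) x :=
  hG.comp_hasDerivAt x ((hasDerivAt_id x).prodMk (hasDerivAt_const x y))

theorem HasFDerivAt.hasDerivAt_slice_snd (hG : HasFDerivAt G G' (x, y)) :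
    HasDerivAt (fun v => G (x, v)) (G' (0, 1)) y :=
  hG.comp_hasDerivAt y ((hasDerivAt_const y x).prodMk (hasDerivAt_id y))

end Slices

theorem hasFDerivAt_fderiv_apply {𝕜 E F : Type*} [NontriviallyNormedField 𝕜]
    [NormedAddCommGroup E] [NormedSpace 𝕜 E] [NormedAddCommGroup F] [NormedSpace 𝕜 F]
    {f : E → F} {p : E} (hf : DifferentiableAt 𝕜 (fderiv 𝕜 f) p) (v : E) :
    HasFDerivAt (fun q => fderiv 𝕜 f q v) ((fderiv 𝕜 (fderiv 𝕜 f) p).flip v) p := by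
  simpa using hf.hasFDerivAt.clm_apply (hasFDerivAt_const v p)

theorem HasDerivAt.le_of_eventually_mul_sub_le {F : ℝ → ℝ} {F' c x : ℝ}
    (hF : HasDerivAt F F' x) (hbound : ∀ᶠ t in 𝓝[>] x, c * (t - x) ≤ F t - F x) : c ≤ F' := by
  have hslope : Tendsto (slope F x) (𝓝[>] x) (𝓝 F') :=
    (hasDerivWithinAt_iff_tendsto_slope' (lt_irrefl x)).1 hF.hasDerivWithinAt
  refine ge_of_tendsto hslope ?_
  filter_upwards [hbound, self_mem_nhdsWithin] with t ht hxt
  rwa [slope_def_field, le_div_iff₀ (sub_pos.2 hxt)]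

section PartialDerivatives

variable {h : ℝ → ℝ → ℝ}

theorem h1_eq_fderiv (hh : Differentiable ℝ (uncurry h)) (x y : ℝ) :
    h1 h x y = fderiv ℝ (uncurry h) (x, y) (1, 0) :=
  (hh (x, y)).hasFDerivAt.hasDerivAt_slice_fst.deriv

theorem h2_eq_fderiv (hh : Differentiable ℝ (uncurry h)) (x y : ℝ) :
    h2 h x y = fderiv ℝ (uncurry h) (x, y) (0, 1) :=
  (hh (x, y)).hasFDerivAt.hasDerivAt_slice_snd.deriv

theorem hasDerivAt_h1 (hh : Differentiable ℝ (uncurry h)) (x y : ℝ) :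
    HasDerivAt (fun u => h u y) (h1 h x y) x := by
  rw [h1_eq_fderiv hh]
  exact (hh (x, y)).hasFDerivAt.hasDerivAt_slice_fst

theorem hasDerivAt_h2 (hh : Differentiable ℝ (uncurry h)) (x y : ℝ) :
    HasDerivAt (fun v => h x v) (h2 h x y) y := by
  rw [h2_eq_fderiv hh]
  exact (hh (x, y)).hasFDerivAt.hasDerivAt_slice_snd

theorem contDiff_uncurry_h1 {m n : WithTop ℕ∞} (hh : ContDiff ℝ n (uncurry h))
    (hmn : m + 1 ≤ n) : ContDiff ℝ m (uncurry (h1 h)) := by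
  have hd : Differentiable ℝ (uncurry h) :=
    (hh.of_le (le_trans le_add_self hmn)).differentiable one_ne_zero
  have : uncurry (h1 h) = fun p => fderiv ℝ (uncurry h) p (1, 0) :=
    funext fun p => h1_eq_fderiv hd p.1 p.2
  rw [this]
  exact (hh.fderiv_right hmn).clm_apply contDiff_const

theorem contDiff_uncurry_h2 {m n : WithTop ℕ∞} (hh : ContDiff ℝ n (uncurry h))
    (hmn : m + 1 ≤ n) : ContDiff ℝ m (uncurry (h2 h)) := by
  have hd : Differentiable ℝ (uncurry h) :=
    (hh.of_le (le_trans le_add_self hmn)).differentiable one_ne_zero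
  have : uncurry (h2 h) = fun p => fderiv ℝ (uncurry h) p (0, 1) :=
    funext fun p => h2_eq_fderiv hd p.1 p.2
  rw [this]
  exact (hh.fderiv_right hmn).clm_apply contDiff_const

theorem differentiable_uncurry_h1 (hh : ContDiff ℝ 2 (uncurry h)) :
    Differentiable ℝ (uncurry (h1 h)) :=
  (contDiff_uncurry_h1 hh le_rfl).differentiable one_ne_zero

theorem differentiable_uncurry_h2 (hh : ContDiff ℝ 2 (uncurry h)) :
    Differentiable ℝ (uncurry (h2 h)) :=
  (contDiff_uncurry_h2 hh le_rfl).differentiable one_ne_zero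

theorem continuous_uncurry_h12 (hh : ContDiff ℝ 2 (uncurry h)) : Continuous (uncurry (h12 h)) :=
  (contDiff_uncurry_h2 (m := 0) (contDiff_uncurry_h1 (m := 1) hh le_rfl) (by norm_num)).continuous

theorem h1_h2_eq_h12 (hh : ContDiff ℝ 2 (uncurry h)) (x y : ℝ) :
    h1 (h2 h) x y = h12 h x y := by
  have hd : Differentiable ℝ (uncurry h) := hh.differentiable two_ne_zero
  have hD : DifferentiableAt ℝ (fderiv ℝ (uncurry h)) (x, y) :=
    (hh.fderiv_right (m := 1) le_rfl).differentiable one_ne_zero _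
  have hh1 : h1 h = fun x y => fderiv ℝ (uncurry h) (x, y) (1, 0) :=
    funext₂ (h1_eq_fderiv hd)
  have hh2 : h2 h = fun x y => fderiv ℝ (uncurry h) (x, y) (0, 1) :=
    funext₂ (h2_eq_fderiv hd)
  calc h1 (h2 h) x y = fderiv ℝ (fderiv ℝ (uncurry h)) (x, y) (1, 0) (0, 1) := by
        rw [hh2]
        exact (hasFDerivAt_fderiv_apply hD _).hasDerivAt_slice_fst.deriv
    _ = fderiv ℝ (fderiv ℝ (uncurry h)) (x, y) (0, 1) (1, 0) :=
        hh.contDiffAt.isSymmSndFDerivAt (by simp) _ _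
    _ = h2 (h1 h) x y := by
        rw [hh1]
        exact (hasFDerivAt_fderiv_apply hD _).hasDerivAt_slice_snd.deriv.symm

theorem strictAnti_h2_fst (hh : ContDiff ℝ 2 (uncurry h)) {y : ℝ}
    (htwist : ∀ x, h12 h x y < 0) :
    StrictAnti (fun x => h2 h x y) :=
  strictAnti_of_hasDerivAt_neg
    (fun x => h1_h2_eq_h12 hh x y ▸ hasDerivAt_h1 (differentiable_uncurry_h2 hh) x y)
    htwist

theorem mul_sub_le_h1_sub_h1 (hh : ContDiff ℝ 2 (uncurry h)) {x y y' m : ℝ} (hyy' : y ≤ y')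
    (hm : ∀ v ∈ Icc y y', h12 h x v ≤ -m) : m * (y' - y) ≤ h1 h x y - h1 h x y' := by
  have hd : Differentiable ℝ (fun v => h1 h x v) := fun v =>
    (hasDerivAt_h2 (differentiable_uncurry_h1 hh) x v).differentiableAt
  have := (convex_Icc y y').image_sub_le_mul_sub_of_deriv_le hd.continuous.continuousOn
    hd.differentiableOn (fun v hv => hm v (interior_subset hv)) y (left_mem_Icc.2 hyy') y'
    (right_mem_Icc.2 hyy') hyy'
  linarith

end PartialDerivatives

theorem second_variation_positive_general (h : ℝ → ℝ → ℝ)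
    (hC2 : ContDiff ℝ 2 (fun p : ℝ × ℝ => h p.1 p.2))
    (htwist : ∀ x y, h12 h x y < 0)
    (φ ψ : ℝ → ℝ) (hmono : StrictMono φ) (K : NNReal)
    (halip : AntilipschitzWith K φ)
    (hrinv : Function.RightInverse ψ φ)
    (hEL : ∀ x, h2 h (ψ x) x + h1 h x (φ x) = 0)
    (a : ℝ → ℝ)
    (ha : ∀ x, a x = h22 h (ψ x) x + h11 h x (φ x)) :
    ∀ x : ℝ, 0 < a x := by
  intro x
  -- scaled by `K` so that the anti-Lipschitz bound is used without dividing by `K`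
  set F : ℝ → ℝ := fun t => K * (h2 h (ψ x) t + h1 h t (φ x))
  have hF : HasDerivAt F (K * a x) x := by
    rw [ha]
    exact ((hasDerivAt_h2 (differentiable_uncurry_h2 hC2) _ _).add
      (hasDerivAt_h1 (differentiable_uncurry_h1 hC2) _ _)).const_mul _
  obtain ⟨m, hm, hm_le⟩ := (isCompact_Icc.prod isCompact_Icc).exists_forall_le'
    (s := Icc x (x + 1) ×ˢ Icc (φ x) (φ (x + 1))) (a := 0)
    (continuous_uncurry_h12 hC2).neg.continuousOn
    (fun p _ => neg_pos.2 (htwist p.1 p.2))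
  have hψ : Monotone ψ := fun s t hst => hmono.le_iff_le.mp (by rwa [hrinv s, hrinv t])
  have hbound : ∀ᶠ t in 𝓝[>] x, m * (t - x) ≤ F t - F x := by
    filter_upwards [Ioo_mem_nhdsGT (lt_add_one x)] with t ⟨hxt, ht1⟩
    have hφ : φ x < φ t := hmono hxt
    have hsep : t - x ≤ K * (φ t - φ x) := by
      simpa [Real.dist_eq, abs_of_pos (sub_pos.2 hxt), abs_of_pos (sub_pos.2 hφ)]
        using halip.le_mul_dist t x
    have hh2 : h2 h (ψ t) t ≤ h2 h (ψ x) t :=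
      (strictAnti_h2_fst hC2 fun u => htwist u t).antitone (hψ hxt.le)
    have hh1 : m * (φ t - φ x) ≤ h1 h t (φ x) - h1 h t (φ t) :=
      mul_sub_le_h1_sub_h1 hC2 hφ.le fun v hv => le_neg.1 (hm_le (t, v)
        ⟨⟨hxt.le, ht1.le⟩, hv.1, hv.2.trans (hmono.monotone ht1.le)⟩)
    have hFt : F t - F x =
        K * ((h2 h (ψ x) t - h2 h (ψ t) t) + (h1 h t (φ x) - h1 h t (φ t))) := by
      simp only [F]
      linear_combination (K : ℝ) * (hEL t - hEL x)
    rw [hFt]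
    nlinarith [K.coe_nonneg]
  exact pos_of_mul_pos_right (hm.trans_le (hF.le_of_eventually_mul_sub_le hbound))
    K.coe_nonneg

/-- on an invariant curve, `a(x) = h₂₂(φ⁻¹(x),x) + h₁₁(x,φ(x)) > 0`
for all `x`. -/
theorem second_variation_positive (h : ℝ → ℝ → ℝ)
    (hC2 : ContDiff ℝ 2 (fun p : ℝ × ℝ => h p.1 p.2))
    (hper : ∀ x y, h (x + 1) (y + 1) = h x y)
    (htwist : ∀ x y, h12 h x y < 0)
    (φ ψ : ℝ → ℝ) (hmono : StrictMono φ) (K : NNReal)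
    (hlip : LipschitzWith K φ) (halip : AntilipschitzWith K φ)
    (hlinv : Function.LeftInverse ψ φ) (hrinv : Function.RightInverse ψ φ)
    (hcomm : ∀ x, φ (x + 1) = φ x + 1)
    (hEL : ∀ x, h2 h (ψ x) x + h1 h x (φ x) = 0)
    (a : ℝ → ℝ)
    (ha : ∀ x, a x = h22 h (ψ x) x + h11 h x (φ x)) :
    ∀ x : ℝ, 0 < a x :=
  second_variation_positive_general h hC2 htwist φ ψ hmono K halip hrinv hEL a ha
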